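/- arXiv:1901.00347 — 2 statements merged into one kernel-verified Lean document; each statement's English description precedes it below -/
import Mathlib

section
/- Let Γ be a group with a finite generating set S ⊆ Γ satisfying 1 ∉ S, and let R be a set of reduced words in the free group on S such that the kernel of the canonical homomorphism from the free group on S onto Γ equals the normal closure of R. Then every closed walk of the Cayley graph Cay(Γ,S) is generated by the set of all closed walks induced by the relators r ∈ R at the vertices of Cay(Γ,S). -/
open SimpleGraph

/-- A drawing of a simple graph `G` in the euclidean plane: an injective map `vmap` of the
vertices into `ℝ²` together with, for each edge `{x, y}`, a continuous injective arc from
`vmap x` to `vmap y` (parametrised by `[0,1]`, and independent of the orientation of the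
edge), such that the arcs of two distinct edges meet only in the images of their common
endvertices, and each arc meets the image of the vertex set only in the images of its two
endvertices. -/
structure PlaneDrawing {V : Type*} (G : SimpleGraph V) where
  vmap : V → ℝ × ℝ
  vmap_inj : Function.Injective vmap
  arc : V → V → ℝ → ℝ × ℝ
  arc_continuousOn : ∀ {x y : V}, G.Adj x y → ContinuousOn (arc x y) (Set.Icc 0 1)
  arc_injOn : ∀ {x y : V}, G.Adj x y → Set.InjOn (arc x y) (Set.Icc 0 1)
  arc_zero : ∀ {x y : V}, G.Adj x y → arc x y 0 = vmap x
  arc_one : ∀ {x y : V}, G.Adj x y → arc x y 1 = vmap y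
  arc_symm : ∀ {x y : V}, G.Adj x y → ∀ t ∈ Set.Icc (0:ℝ) 1, arc y x t = arc x y (1 - t)
  arc_arc : ∀ {x y z w : V}, G.Adj x y → G.Adj z w → s(x, y) ≠ s(z, w) →
    (arc x y '' Set.Icc 0 1) ∩ (arc z w '' Set.Icc 0 1) ⊆
      vmap '' ({x, y} ∩ {z, w} : Set V)
  arc_vmap : ∀ {x y : V}, G.Adj x y →
    (arc x y '' Set.Icc 0 1) ∩ Set.range vmap ⊆ {vmap x, vmap y}

/-- A simple graph is planar if it admits a drawing in the plane. -/
def IsPlanarGraph {V : Type*} (G : SimpleGraph V) : Prop :=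
  Nonempty (PlaneDrawing G)

/-- The Cayley graph of a group `Γ` with respect to a generating set `S ⊆ Γ` with `1 ∉ S`:
the simple graph on `Γ` in which distinct `x, y` are adjacent iff `x⁻¹ * y ∈ S` or
`y⁻¹ * x ∈ S`. -/
def cayley (Γ : Type*) [Group Γ] (S : Set Γ) : SimpleGraph Γ where
  Adj x y := x ≠ y ∧ (x⁻¹ * y ∈ S ∨ y⁻¹ * x ∈ S)
  symm := by
    constructor
    rintro x y ⟨hxy, h⟩
    exact ⟨hxy.symm, h.symm⟩
  loopless := by
    constructor
    rintro x ⟨hx, -⟩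
    exact hx rfl

open SimpleGraph

/-- The set of closed walks of a simple graph `G` generated by a family `𝒱` of closed walks:
the smallest family of closed walks containing `𝒱` and all trivial closed walks which is
closed under concatenation of two closed walks at the same base vertex, rotation (cyclically
shifting the base point), reversal, and insertion and deletion of spikes. -/
inductive WalkGen {V : Type*} [DecidableEq V] (G : SimpleGraph V)
    (𝒱 : ∀ v : V, Set (G.Walk v v)) : ∀ v : V, G.Walk v v → Prop
  | base {v : V} (w : G.Walk v v) : w ∈ 𝒱 v → WalkGen G 𝒱 v w
  | nil (v : V) : WalkGen G 𝒱 v Walk.nil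
  | concat {v : V} {w₁ w₂ : G.Walk v v} :
      WalkGen G 𝒱 v w₁ → WalkGen G 𝒱 v w₂ → WalkGen G 𝒱 v (w₁.append w₂)
  | rotate {v u : V} {w : G.Walk v v} (hw : WalkGen G 𝒱 v w) (h : u ∈ w.support) :
      WalkGen G 𝒱 u (w.rotate u h)
  | reverse {v : V} {w : G.Walk v v} : WalkGen G 𝒱 v w → WalkGen G 𝒱 v w.reverse
  | addSpike {v x y : V} (p : G.Walk v x) (q : G.Walk x v) (h : G.Adj x y) :
      WalkGen G 𝒱 v (p.append q) →
      WalkGen G 𝒱 v (p.append (Walk.cons h (Walk.cons h.symm q)))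
  | delSpike {v x y : V} (p : G.Walk v x) (q : G.Walk x v) (h : G.Adj x y) :
      WalkGen G 𝒱 v (p.append (Walk.cons h (Walk.cons h.symm q))) →
      WalkGen G 𝒱 v (p.append q)

/-- The list of vertices of the closed walk induced by the reduced word of `r : FreeGroup S`
at the vertex `g` of the Cayley graph `Cay(Γ,S)`: the partial products
`g, g s₁^{ε₁}, g s₁^{ε₁} s₂^{ε₂}, …`. -/
noncomputable def relatorTrace {Γ : Type*} [Group Γ] {S : Set Γ} (g : Γ)
    (r : FreeGroup S) : List Γ :=
  letI : DecidableEq S := Classical.decEq _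
  r.toWord.scanl (fun x p => x * (if p.2 then (p.1 : Γ) else (p.1 : Γ)⁻¹)) g

/-! A closed walk at `g` spells a word `l` in the letters `S^{±1}` whose value in `Γ` is `1`, so
`FreeGroup.mk l` lies in the normal closure of `R`. Whether all closed walks spelling `l` are
generated depends only on `FreeGroup.mk l`: cancelling a pair `a a⁻¹` in the word deletes a spike
from the walk. The property holds for a conjugate `u r u⁻¹` of a relator, because the walk
`p c p⁻¹` (out along `u`, around the relator loop `c`, back along `u`) arises from `c` by repeatedly
inserting a spike and rotating; and it passes to products (concatenation) and inverses (reversal),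
hence to the whole normal closure. -/

namespace SimpleGraph.Walk

variable {V : Type*} [DecidableEq V] {G : SimpleGraph V}

theorem rotate_cons_snd {u v : V} (h : G.Adj u v) (w : G.Walk v u)
    (hv : v ∈ (cons h w).support) : (cons h w).rotate v hv = w.append (cons h nil) := by
  simp [rotate, takeUntil, dropUntil, h.ne]

end SimpleGraph.Walk

namespace WalkGen

variable {V : Type*} [DecidableEq V] {G : SimpleGraph V} {𝒱 : ∀ v : V, Set (G.Walk v v)}

theorem append_append_reverse {u v : V} (p : G.Walk u v) {c : G.Walk v v}
    (hc : WalkGen G 𝒱 v c) : WalkGen G 𝒱 u ((p.append c).append p.reverse) := by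
  induction p with
  | nil => simpa using hc
  | @cons u x v h p ih =>
    have hspike : WalkGen G 𝒱 x (.cons h.symm (.cons h ((p.append c).append p.reverse))) :=
      WalkGen.addSpike .nil _ h.symm (ih hc)
    have hrot := hspike.rotate (u := u) (by simp)
    rw [Walk.rotate_cons_snd h.symm _ (by simp)] at hrot
    simpa [Walk.append_assoc] using hrot

end WalkGen

namespace cayley

variable {Γ : Type*} [Group Γ] {S : Set Γ}

local notation "π" => FreeGroup.lift (fun s : S => (s : Γ))

def mulLetter (g : Γ) (p : S × Bool) : Γ := g * (if p.2 then (p.1 : Γ) else (p.1 : Γ)⁻¹)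

theorem adj_mulLetter (h1 : (1 : Γ) ∉ S) (g : Γ) (p : S × Bool) :
    (cayley Γ S).Adj g (mulLetter g p) := by
  obtain ⟨⟨s, hs⟩, b⟩ := p
  have hs1 : s ≠ 1 := fun h => h1 (h ▸ hs)
  cases b <;> simp [cayley, mulLetter, hs, hs1, mul_assoc]

theorem mulLetter_mulLetter_not (g : Γ) (s : S) (b : Bool) :
    mulLetter (mulLetter g (s, b)) (s, !b) = g := by
  cases b <;> simp [mulLetter, mul_assoc]

theorem foldl_mulLetter (g : Γ) (l : List (S × Bool)) :
    l.foldl mulLetter g = g * π (FreeGroup.mk l) := by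
  rw [FreeGroup.lift_mk]
  induction l generalizing g with
  | nil => simp
  | cons p l ih =>
    obtain ⟨s, _ | _⟩ := p <;> simp [ih, mulLetter, mul_assoc]

theorem foldl_mulLetter_eq_self {l : List (S × Bool)}
    (hl : π (FreeGroup.mk l) = 1) (g : Γ) :
    l.foldl mulLetter g = g := by
  rw [foldl_mulLetter, hl, mul_one]

theorem scanl_mulLetter_invRev (l : List (S × Bool)) (g : Γ) :
    (FreeGroup.invRev l).scanl mulLetter (l.foldl mulLetter g) = (l.scanl mulLetter g).reverse := by
  induction l generalizing g with
  | nil => simp [FreeGroup.invRev]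
  | cons p l ih =>
    obtain ⟨s, b⟩ := p
    rw [FreeGroup.invRev_cons, List.scanl_append, List.foldl_cons, ih, foldl_mulLetter,
      foldl_mulLetter, ← FreeGroup.inv_mk, map_inv, mul_inv_cancel_right]
    simp [FreeGroup.invRev, mulLetter_mulLetter_not]

theorem relatorTrace_eq_scanl [DecidableEq S] (g : Γ) (r : FreeGroup S) :
    relatorTrace g r = r.toWord.scanl mulLetter g := by
  unfold relatorTrace mulLetter
  congr
  exact Subsingleton.elim _ _

def wordWalk (h1 : (1 : Γ) ∉ S) (g : Γ) :
    (l : List (S × Bool)) → (cayley Γ S).Walk g (l.foldl mulLetter g)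
  | [] => .nil
  | p :: l => .cons (adj_mulLetter h1 g p) (wordWalk h1 (mulLetter g p) l)

theorem support_wordWalk (h1 : (1 : Γ) ∉ S) (g : Γ) (l : List (S × Bool)) :
    (wordWalk h1 g l).support = l.scanl mulLetter g := by
  induction l generalizing g with
  | nil => rfl
  | cons p l ih => simp [wordWalk, ih]

noncomputable def letterOf {x y : Γ} (h : (cayley Γ S).Adj x y) : S × Bool :=
  open Classical in
  if hs : x⁻¹ * y ∈ S then (⟨x⁻¹ * y, hs⟩, true) else (⟨y⁻¹ * x, h.2.resolve_left hs⟩, false)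

theorem mulLetter_letterOf {x y : Γ} (h : (cayley Γ S).Adj x y) : mulLetter x (letterOf h) = y := by
  unfold letterOf
  split <;> simp [mulLetter]

noncomputable def wordOf {x y : Γ} : (cayley Γ S).Walk x y → List (S × Bool)
  | .nil => []
  | .cons h w => letterOf h :: wordOf w

theorem scanl_wordOf {x y : Γ} (w : (cayley Γ S).Walk x y) :
    (wordOf w).scanl mulLetter x = w.support := by
  induction w with
  | nil => rfl
  | cons h w ih => simp [wordOf, mulLetter_letterOf, ih]

theorem foldl_wordOf {x y : Γ} (w : (cayley Γ S).Walk x y) :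
    (wordOf w).foldl mulLetter x = y := by
  induction w with
  | nil => rfl
  | cons h w ih => simp [wordOf, mulLetter_letterOf, ih]

def loopWalk (h1 : (1 : Γ) ∉ S) (g : Γ) (l : List (S × Bool))
    (hl : π (FreeGroup.mk l) = 1) : (cayley Γ S).Walk g g :=
  (wordWalk h1 g l).copy rfl (foldl_mulLetter_eq_self hl g)

theorem support_loopWalk (h1 : (1 : Γ) ∉ S) (g : Γ) (l : List (S × Bool))
    (hl : π (FreeGroup.mk l) = 1) :
    (loopWalk h1 g l hl).support = l.scanl mulLetter g := by
  rw [loopWalk, Walk.support_copy, support_wordWalk]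

theorem lift_mk_wordOf {g : Γ} (w : (cayley Γ S).Walk g g) :
    π (FreeGroup.mk (wordOf w)) = 1 := by
  simpa [foldl_wordOf] using foldl_mulLetter g (wordOf w)

section WordGen

variable [DecidableEq Γ] (𝒱 : ∀ v : Γ, Set ((cayley Γ S).Walk v v))

def WordGen (g : Γ) (l : List (S × Bool)) : Prop :=
  ∀ w : (cayley Γ S).Walk g g, w.support = l.scanl mulLetter g → WalkGen (cayley Γ S) 𝒱 g w

variable {𝒱}

theorem wordGen_iff {g : Γ} {l : List (S × Bool)} {w : (cayley Γ S).Walk g g}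
    (hw : w.support = l.scanl mulLetter g) : WordGen 𝒱 g l ↔ WalkGen (cayley Γ S) 𝒱 g w :=
  ⟨fun h => h w hw, fun h _ hw' => Walk.ext_support (hw'.trans hw.symm) ▸ h⟩

theorem wordGen_nil (g : Γ) : WordGen 𝒱 g [] :=
  (wordGen_iff (w := .nil) rfl).2 (.nil g)

theorem WordGen.walkGen_loopWalk (h1 : (1 : Γ) ∉ S) {g : Γ} {l : List (S × Bool)}
    (hl : π (FreeGroup.mk l) = 1) (h : WordGen 𝒱 g l) :
    WalkGen (cayley Γ S) 𝒱 g (loopWalk h1 g l hl) :=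
  h _ (support_loopWalk h1 g l hl)

theorem wordGen_iff_of_step (h1 : (1 : Γ) ∉ S) {l₁ l₂ : List (S × Bool)}
    (hs : FreeGroup.Red.Step l₁ l₂)
    (hl : π (FreeGroup.mk l₂) = 1) (g : Γ) :
    WordGen 𝒱 g l₁ ↔ WordGen 𝒱 g l₂ := by
  obtain @⟨L₁, L₂, s, b⟩ := hs
  set x := L₁.foldl mulLetter g
  have hq : L₂.foldl mulLetter x = g := by
    rw [← List.foldl_append]; exact foldl_mulLetter_eq_self hl g
  let p := wordWalk h1 g L₁
  let q := (wordWalk h1 x L₂).copy rfl hq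
  have hadj := adj_mulLetter h1 x (s, b)
  rw [wordGen_iff (w := p.append (.cons hadj (.cons hadj.symm q))),
    wordGen_iff (w := p.append q)]
  · exact ⟨.delSpike p q hadj, .addSpike p q hadj⟩
  · simp only [x, p, q, Walk.support_append, Walk.support_copy, support_wordWalk,
      List.scanl_append]
  · simp only [x, p, q, Walk.support_append, Walk.support_cons, Walk.support_copy,
      support_wordWalk, List.scanl_append, List.scanl_cons, List.tail_cons,
      mulLetter_mulLetter_not]

theorem wordGen_iff_of_red (h1 : (1 : Γ) ∉ S) {l₁ l₂ : List (S × Bool)}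
    (h : FreeGroup.Red l₁ l₂)
    (hl : π (FreeGroup.mk l₂) = 1) (g : Γ) :
    WordGen 𝒱 g l₁ ↔ WordGen 𝒱 g l₂ := by
  induction h using Relation.ReflTransGen.head_induction_on with
  | refl => rfl
  | head hs hred ih =>
    have hmk := FreeGroup.Red.exact.2 ⟨_, hred, .refl⟩
    exact (wordGen_iff_of_step h1 hs (hmk ▸ hl) g).trans ih

theorem wordGen_congr (h1 : (1 : Γ) ∉ S) {l₁ l₂ : List (S × Bool)}
    (h : FreeGroup.mk l₁ = FreeGroup.mk l₂)
    (hl : π (FreeGroup.mk l₁) = 1) (g : Γ) :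
    WordGen 𝒱 g l₁ ↔ WordGen 𝒱 g l₂ := by
  obtain ⟨L, h₁, h₂⟩ := FreeGroup.Red.exact.1 h
  have hL : π (FreeGroup.mk L) = 1 :=
    FreeGroup.Red.exact.2 ⟨L, h₁, .refl⟩ ▸ hl
  exact (wordGen_iff_of_red h1 h₁ hL g).trans (wordGen_iff_of_red h1 h₂ hL g).symm

theorem WordGen.append (h1 : (1 : Γ) ∉ S) {g : Γ} {l₁ l₂ : List (S × Bool)}
    (hl₁ : π (FreeGroup.mk l₁) = 1)
    (hl₂ : π (FreeGroup.mk l₂) = 1)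
    (h₁ : WordGen 𝒱 g l₁) (h₂ : WordGen 𝒱 g l₂) : WordGen 𝒱 g (l₁ ++ l₂) := by
  rw [wordGen_iff (w := (loopWalk h1 g l₁ hl₁).append (loopWalk h1 g l₂ hl₂))]
  · exact .concat (h₁.walkGen_loopWalk h1 hl₁) (h₂.walkGen_loopWalk h1 hl₂)
  · rw [Walk.support_append, support_loopWalk, support_loopWalk, List.scanl_append,
      foldl_mulLetter_eq_self hl₁]

theorem WordGen.invRev (h1 : (1 : Γ) ∉ S) {g : Γ} {l : List (S × Bool)}
    (hl : π (FreeGroup.mk l) = 1) (h : WordGen 𝒱 g l) :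
    WordGen 𝒱 g (FreeGroup.invRev l) := by
  rw [wordGen_iff (w := (loopWalk h1 g l hl).reverse)]
  · exact .reverse (h.walkGen_loopWalk h1 hl)
  · rw [Walk.support_reverse, support_loopWalk, ← scanl_mulLetter_invRev,
      foldl_mulLetter_eq_self hl]

theorem WordGen.conj (h1 : (1 : Γ) ∉ S) {g : Γ} (u : List (S × Bool)) {r : List (S × Bool)}
    (hr : π (FreeGroup.mk r) = 1)
    (h : WordGen 𝒱 (u.foldl mulLetter g) r) : WordGen 𝒱 g (u ++ r ++ FreeGroup.invRev u) := by
  let p := wordWalk h1 g u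
  rw [wordGen_iff (w := (p.append (loopWalk h1 _ r hr)).append p.reverse)]
  · exact WalkGen.append_append_reverse p (h.walkGen_loopWalk h1 hr)
  · rw [Walk.support_append, Walk.support_append, Walk.support_reverse, support_loopWalk,
      support_wordWalk, List.scanl_append, List.scanl_append, List.foldl_append,
      foldl_mulLetter_eq_self hr, scanl_mulLetter_invRev]

theorem wordGen_of_mem_normalClosure (h1 : (1 : Γ) ∉ S) {R : Set (FreeGroup S)}
    (hRker : Subgroup.normalClosure R ≤ (π).ker)
    (hR : ∀ r ∈ R, ∃ l, FreeGroup.mk l = r ∧ ∀ g, WordGen 𝒱 g l) {l : List (S × Bool)}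
    (hl : FreeGroup.mk l ∈ Subgroup.normalClosure R) (g : Γ) : WordGen 𝒱 g l := by
  classical
  have hπ {l : List (S × Bool)} (hl : FreeGroup.mk l ∈ Subgroup.normalClosure R) :
      π (FreeGroup.mk l) = 1 := hRker hl
  suffices ∀ n ∈ Subgroup.normalClosure R, ∃ l', FreeGroup.mk l' = n ∧ ∀ g, WordGen 𝒱 g l' by
    obtain ⟨l', hmk, hl'⟩ := this _ hl
    exact (wordGen_congr h1 hmk.symm (hπ hl) g).2 (hl' g)
  intro n hn
  induction hn using Subgroup.closure_induction with
  | mem m hm =>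
    obtain ⟨r, hr, hconj⟩ := Group.mem_conjugatesOfSet_iff.1 hm
    obtain ⟨u, rfl⟩ := isConj_iff.1 hconj
    obtain ⟨lr, rfl, hlr⟩ := hR r hr
    refine ⟨u.toWord ++ lr ++ FreeGroup.invRev u.toWord, ?_, fun g => ?_⟩
    · rw [← FreeGroup.mul_mk, ← FreeGroup.mul_mk, ← FreeGroup.inv_mk, FreeGroup.mk_toWord]
    · exact WordGen.conj h1 _ (hπ (Subgroup.subset_normalClosure hr)) (hlr _)
  | one => exact ⟨[], rfl, wordGen_nil⟩
  | mul m₁ m₂ hm₁ hm₂ ih₁ ih₂ =>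
    obtain ⟨l₁, rfl, h₁⟩ := ih₁
    obtain ⟨l₂, rfl, h₂⟩ := ih₂
    exact ⟨l₁ ++ l₂, FreeGroup.mul_mk.symm, fun g => (h₁ g).append h1 (hπ hm₁) (hπ hm₂) (h₂ g)⟩
  | inv m hm ih =>
    obtain ⟨l, rfl, h⟩ := ih
    exact ⟨FreeGroup.invRev l, FreeGroup.inv_mk.symm, fun g => (h g).invRev h1 (hπ hm)⟩

end WordGen

end cayley

theorem stmt5_general {Γ : Type*} [Group Γ] [DecidableEq Γ] (S : Set Γ)
    (h1 : (1 : Γ) ∉ S) (R : Set (FreeGroup S))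
    (hker : (FreeGroup.lift (fun s : S => (s : Γ))).ker = Subgroup.normalClosure R) :
    ∀ (g : Γ) (w : (cayley Γ S).Walk g g),
      WalkGen (cayley Γ S)
        (fun u => {c : (cayley Γ S).Walk u u | ∃ r ∈ R, c.support = relatorTrace u r})
        g w := by
  classical
  intro g w
  have hw : FreeGroup.mk (cayley.wordOf w) ∈ Subgroup.normalClosure R :=
    hker ▸ cayley.lift_mk_wordOf w
  refine cayley.wordGen_of_mem_normalClosure h1 hker.ge (fun r hr => ?_) hw g w
    (cayley.scanl_wordOf w).symm
  exact ⟨r.toWord, FreeGroup.mk_toWord, fun x c hc =>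
    .base c ⟨r, hr, hc.trans (cayley.relatorTrace_eq_scanl x r).symm⟩⟩

/-- Let `Γ` be generated by a finite set `S` with `1 ∉ S`, and let `R` be a set of words in
the free group on `S` whose normal closure is the kernel of the canonical homomorphism
`FreeGroup S →* Γ`.  Then every closed walk of the Cayley graph `Cay(Γ,S)` is generated by
the closed walks induced by the relators `r ∈ R` at the vertices of `Cay(Γ,S)`. -/
theorem stmt5 {Γ : Type*} [Group Γ] [DecidableEq Γ] (S : Set Γ) (hfin : S.Finite)
    (h1 : (1 : Γ) ∉ S) (hgen : Subgroup.closure S = ⊤) (R : Set (FreeGroup S))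
    (hker : (FreeGroup.lift (fun s : S => (s : Γ))).ker = Subgroup.normalClosure R) :
    ∀ (g : Γ) (w : (cayley Γ S).Walk g g),
      WalkGen (cayley Γ S)
        (fun u => {c : (cayley Γ S).Walk u u | ∃ r ∈ R, c.support = relatorTrace u r})
        g w :=
  stmt5_general S h1 R hker
end

section
/- In any simple graph G, every indecomposable closed walk of positive length is a cycle: its vertices are pairwise distinct except that its first vertex equals its last vertex (in particular its length is at least 3). Here a closed walk W is indecomposable if it is not generated by the set of all closed walks of G whose length is strictly smaller than the length of W. -/
open SimpleGraph

/-!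
If a vertex repeats in the tail of the support of a closed walk `w`, then `w` splits as
`p ++ c ++ q` with `c` a nontrivial closed walk and `p` nontrivial. Both `c` and the rotated
remainder `q ++ p` are strictly shorter than `w`, and `w` is a rotation of their concatenation,
so `w` is decomposable. A closed walk of length at most two is trivial or a single spike, hence
generated by any family.
-/

namespace SimpleGraph.Walk

variable {V : Type*} {G : SimpleGraph V}

theorem exists_eq_append_append_of_not_nodup_support {a b : V} (w : G.Walk a b)
    (hw : ¬ w.support.Nodup) :
    ∃ (u : V) (p : G.Walk a u) (c : G.Walk u u) (q : G.Walk u b),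
      w = p.append (c.append q) ∧ ¬ c.Nil := by
  induction w with
  | nil => simp at hw
  | @cons a a' b h w ih =>
    rw [support_cons, List.nodup_cons, not_and_or, not_not] at hw
    rcases hw with ha | hw
    · obtain ⟨c, q, rfl⟩ := mem_support_iff_exists_append.mp ha
      exact ⟨a, nil, cons h c, q, rfl, not_nil_cons⟩
    · obtain ⟨u, p, c, q, rfl, hc⟩ := ih hw
      exact ⟨u, cons h p, c, q, rfl, hc⟩

end SimpleGraph.Walk

namespace WalkGen

variable {V : Type*} [DecidableEq V] {G : SimpleGraph V} {𝒱 : ∀ v : V, Set (G.Walk v v)}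

theorem cons_rotate {u b : V} (h : G.Adj u b) (t : G.Walk b u)
    (hg : WalkGen G 𝒱 u (Walk.cons h t)) :
    WalkGen G 𝒱 b (t.append (Walk.cons h Walk.nil)) := by
  have hb : b ∈ (Walk.cons h t).support := by simp
  have hne : u ≠ b := G.ne_of_adj h
  have hrot := hg.rotate hb
  rwa [Walk.rotate, Walk.dropUntil, dif_neg hne, Walk.dropUntil_first,
    Walk.takeUntil, dif_neg hne, Walk.takeUntil_first] at hrot

theorem append_comm {v u : V} (p : G.Walk v u) (q : G.Walk u v)
    (hg : WalkGen G 𝒱 v (p.append q)) : WalkGen G 𝒱 u (q.append p) := by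
  induction p with
  | nil => rwa [Walk.nil_append, ← Walk.append_nil q] at hg
  | cons h p ih =>
    rw [Walk.cons_append] at hg
    have hrot := cons_rotate h _ hg
    rw [← Walk.append_assoc] at hrot
    rw [← Walk.cons_nil_append, Walk.append_assoc]
    exact ih _ hrot

theorem append_append {v u : V} {p : G.Walk v u} {c : G.Walk u u} {q : G.Walk u v}
    (hc : WalkGen G 𝒱 u c) (hqp : WalkGen G 𝒱 u (q.append p)) :
    WalkGen G 𝒱 v (p.append (c.append q)) := by
  have hcat := hc.concat hqp
  rw [Walk.append_assoc] at hcat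
  exact append_comm _ _ hcat

theorem of_length_le_two {v : V} (w : G.Walk v v) (hw : w.length ≤ 2) : WalkGen G 𝒱 v w := by
  match w, hw with
  | .nil, _ => exact .nil v
  | .cons h .nil, _ => exact absurd rfl h.ne
  | .cons h (.cons _ .nil), _ => simpa using addSpike .nil .nil h (.nil v)

end WalkGen

theorem stmt6_general {V : Type*} [DecidableEq V] (G : SimpleGraph V) {v : V} (w : G.Walk v v)
    (hind : ¬ WalkGen G (fun u => {c : G.Walk u u | c.length < w.length}) v w) :
    w.support.tail.Nodup ∧ 3 ≤ w.length := by
  refine ⟨?_, ?_⟩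
  · cases w with
    | nil => simp
    | cons h t =>
      by_contra hdup
      obtain ⟨u, p, c, q, rfl, hc⟩ :=
        t.exists_eq_append_append_of_not_nodup_support (by simpa using hdup)
      have hc_pos : 0 < c.length := Walk.not_nil_iff_lt_length.mp hc
      apply hind
      rw [← Walk.cons_append]
      refine WalkGen.append_append (.base _ ?_) (.base _ ?_) <;>
        simp only [Set.mem_ofPred_eq, Walk.length_append, Walk.length_cons] <;> omega
  · by_contra hlt
    exact hind (WalkGen.of_length_le_two w (by omega))

/-- Every indecomposable closed walk of positive length in a simple graph is a cycle: its
vertices are pairwise distinct except that its first vertex equals its last vertex, and in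
particular its length is at least 3.  Here a closed walk `w` is indecomposable if it is not
generated by the set of all closed walks of `G` of length strictly smaller than that of `w`. -/
theorem stmt6 {V : Type*} [DecidableEq V] (G : SimpleGraph V) {v : V} (w : G.Walk v v)
    (hpos : 0 < w.length)
    (hind : ¬ WalkGen G (fun u => {c : G.Walk u u | c.length < w.length}) v w) :
    w.support.tail.Nodup ∧ 3 ≤ w.length :=
  stmt6_general G w hind
end
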